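/- Fix δ > 0 and let W be a standard d-dimensional Brownian motion started at 0. Then Y_{0,1}(W) < ∞ almost surely and E_0[Y_{0,1}(W)] < ∞, where Y_{0,1}(W) = inf{ ∫_0^1 |φ̇(u)|² du : φ absolutely continuous on [0,1], φ(0) = 0, φ(1) = W(1), sup_{u ∈ [0,1]} |W(u) − φ(u)| ≤ δ/2 }. -/

import Mathlib

/-!
Mollify the path at a dyadic scale `ε = 2⁻ⁿ`: the moving average `u ↦ ε⁻¹ ∫_u^{u+ε} W`,
corrected by a linear drift so that it ends at `W 1`, stays within `δ / 2` of `W` as soon as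
the oscillation of `W` at scale `ε` is at most `δ / 8`, and its energy is then at most `δ² 4ⁿ`.
Chaining over the dyadic grids bounds that oscillation by twice the tail `∑_{m ≥ n} M_m` of the
maximal dyadic increments, so `Y ≤ δ² 4^N` for the first scale `N` at which the tail is at most
`δ / 16`. The indicator of the bad event `{tail_n > δ / 16}` is at most the Markov-type sum
`∑_j (M_{n+j} / b_j)⁸` for weights `b_j` summing to `δ / 16`; this dominates `Y` by an explicit
random variable whose expectation is finite, because Gaussian increments give
`E M_m⁸ ≤ 2^{m+1} d⁴ 16^{-m} E Z⁸`, which decays like `8^{-m}`, faster than `4ⁿ` grows.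
-/

open MeasureTheory ProbabilityTheory Filter
open scoped ENNReal NNReal Topology

noncomputable section

/-- A standard `d`-dimensional Brownian motion started at `x₀`, defined through its
finite-dimensional distributions: measurable in `ω`, a.s. continuous paths starting at `x₀`,
independent increments, independent coordinates, and Gaussian increments of variance `t - s`. -/
structure IsBrownianMotion (d : ℕ) {Ω : Type*} [MeasurableSpace Ω] (P : Measure Ω)
    (W : Ω → ℝ → EuclideanSpace ℝ (Fin d)) (x₀ : EuclideanSpace ℝ (Fin d)) : Prop where
  meas : ∀ t : ℝ, Measurable fun ω => W ω t
  start : ∀ᵐ ω ∂P, W ω 0 = x₀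
  cont : ∀ᵐ ω ∂P, Continuous (W ω)
  indep_incr : ∀ (n : ℕ) (t : ℕ → ℝ), Monotone t → 0 ≤ t 0 →
    iIndepFun
      (fun (i : Fin n) ω => W ω (t (i + 1)) - W ω (t i)) P
  indep_coord : ∀ s t : ℝ, 0 ≤ s → s ≤ t →
    iIndepFun
      (fun (i : Fin d) ω => (W ω t - W ω s) i) P
  gauss_incr : ∀ s t : ℝ, 0 ≤ s → s ≤ t → ∀ i : Fin d,
    Measure.map (fun ω => (W ω t - W ω s) i) P = gaussianReal 0 (Real.toNNReal (t - s))

/-- The constrained Dirichlet energy `Y_{s,t}(W)`: the infimum of `∫_s^t |φ̇(u)|² du` over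
absolutely continuous paths `φ : [s,t] → ℝ^d` with `φ(s) = W(s)`, `φ(t) = W(t)` and
`sup_{u ∈ [s,t]} |W(u) − φ(u)| ≤ δ/2` (the infimum over the empty set being `+∞`).
An absolutely continuous path is encoded by an integrable derivative `g`, via
`φ(u) = W(s) + ∫_s^u g(v) dv`, and its Dirichlet energy is `∫_s^t ‖g(v)‖² dv ∈ [0,∞]`. -/
def energyInf (d : ℕ) (δ : ℝ) (W : ℝ → EuclideanSpace ℝ (Fin d)) (s t : ℝ) : ℝ≥0∞ :=
  sInf {e : ℝ≥0∞ | ∃ g : ℝ → EuclideanSpace ℝ (Fin d),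
    MeasureTheory.IntegrableOn g (Set.Ioc s t) ∧
    W s + (∫ v in Set.Ioc s t, g v) = W t ∧
    (∀ u ∈ Set.Icc s t, ‖W u - (W s + ∫ v in Set.Ioc s u, g v)‖ ≤ δ / 2) ∧
    e = ∫⁻ v in Set.Ioc s t, ENNReal.ofReal (‖g v‖ ^ 2)}

open Set

section Chaining

variable {X : Type*} [PseudoEMetricSpace X]

/-- The grid covers `[0, 2]` because the moving average at a time `u ≤ 1` looks ahead to
`u + 2⁻ⁿ`. -/
def dyadicIncrMax (f : ℝ → X) (m : ℕ) : ℝ≥0∞ :=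
  (Finset.range (2 ^ (m + 1))).sup fun k => edist (f (k / 2 ^ m)) (f ((k + 1) / 2 ^ m))

lemma edist_le_dyadicIncrMax (f : ℝ → X) {m k : ℕ} (hk : k < 2 ^ (m + 1)) :
    edist (f (k / 2 ^ m)) (f ((k + 1) / 2 ^ m)) ≤ dyadicIncrMax f m :=
  Finset.le_sup (f := fun k : ℕ => edist (f (k / 2 ^ m)) (f ((k + 1) / 2 ^ m)))
    (Finset.mem_range.2 hk)

lemma tsum_dyadicIncrMax_eq_add (f : ℝ → X) (n : ℕ) :
    ∑' m, dyadicIncrMax f (m + n) = dyadicIncrMax f n + ∑' m, dyadicIncrMax f (m + (n + 1)) := by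
  rw [tsum_eq_zero_add' ENNReal.summable, zero_add]
  simp only [Nat.add_right_comm _ 1, add_assoc]

def dyadicFloor (m : ℕ) (x : ℝ) : ℝ := ⌊x * 2 ^ m⌋₊ / 2 ^ m

lemma dyadicFloor_le {x : ℝ} (hx : 0 ≤ x) (m : ℕ) : dyadicFloor m x ≤ x :=
  div_le_of_le_mul₀ (by positivity) hx (Nat.floor_le (by positivity))

lemma sub_lt_dyadicFloor (x : ℝ) (m : ℕ) : x - (2 ^ m)⁻¹ < dyadicFloor m x := by
  rw [dyadicFloor, lt_div_iff₀ (by positivity), sub_mul, inv_mul_cancel₀ (by positivity)]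
  linarith [Nat.lt_floor_add_one (x * 2 ^ m)]

lemma tendsto_dyadicFloor {x : ℝ} (hx : 0 ≤ x) :
    Tendsto (fun m => dyadicFloor m x) atTop (𝓝 x) := by
  have h : Tendsto (fun m : ℕ => x - ((2 : ℝ) ^ m)⁻¹) atTop (𝓝 x) := by
    simpa using tendsto_const_nhds.sub
      (tendsto_inv_atTop_zero.comp (tendsto_pow_atTop_atTop_of_one_lt (one_lt_two (α := ℝ))))
  exact tendsto_of_tendsto_of_tendsto_of_le_of_le h tendsto_const_nhds
    (fun m => (sub_lt_dyadicFloor x m).le) (fun m => dyadicFloor_le hx m)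

lemma natFloor_mul_two_pow_le {x : ℝ} (hx : x ∈ Icc (0 : ℝ) 2) (m : ℕ) :
    ⌊x * 2 ^ m⌋₊ ≤ 2 ^ (m + 1) := by
  apply Nat.floor_le_of_le
  push_cast
  rw [pow_succ]
  nlinarith [hx.2, pow_pos (two_pos (α := ℝ)) m]

lemma edist_dyadicFloor_succ_le (f : ℝ → X) {x : ℝ} (hx : x ∈ Icc (0 : ℝ) 2) (m : ℕ) :
    edist (f (dyadicFloor m x)) (f (dyadicFloor (m + 1) x)) ≤ dyadicIncrMax f (m + 1) := by
  set k := ⌊x * 2 ^ (m + 1)⌋₊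
  have hk : ⌊x * 2 ^ m⌋₊ = k / 2 := by
    rw [← Nat.floor_div_ofNat, pow_succ, mul_div_assoc, mul_div_cancel_right₀ _ two_ne_zero]
  have hfloor : dyadicFloor m x = (2 * (k / 2) : ℕ) / 2 ^ (m + 1) := by
    rw [dyadicFloor, hk, pow_succ]; push_cast; field_simp
  rcases Nat.even_or_odd' k with ⟨j, hj | hj⟩
  · have : dyadicFloor (m + 1) x = dyadicFloor m x := by
      rw [hfloor, dyadicFloor, hj]; congr 2; omega
    rw [this, edist_self]
    exact zero_le
  · have hjk : 2 * (k / 2) = 2 * j := by omega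
    have : dyadicFloor (m + 1) x = ((2 * j : ℕ) + 1) / 2 ^ (m + 1) := by
      show (k : ℝ) / _ = _
      rw [hj]; push_cast; ring
    rw [this, hfloor, hjk]
    apply edist_le_dyadicIncrMax
    have := natFloor_mul_two_pow_le hx (m + 1)
    omega

lemma edist_dyadicFloor_le_tsum {f : ℝ → X} (hf : Continuous f) {x : ℝ} (hx : x ∈ Icc (0 : ℝ) 2)
    (n : ℕ) : edist (f (dyadicFloor n x)) (f x) ≤ ∑' m, dyadicIncrMax f (m + (n + 1)) := by
  have hchain (p : ℕ) : edist (f (dyadicFloor (0 + n) x)) (f (dyadicFloor (p + n) x)) ≤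
      ∑' m, dyadicIncrMax f (m + (n + 1)) := by
    refine (edist_le_range_sum_of_edist_le (f := fun i => f (dyadicFloor (i + n) x)) p
      fun {i} _ => ?_).trans (ENNReal.sum_le_tsum _)
    simpa only [Nat.add_right_comm i 1 n, add_assoc] using edist_dyadicFloor_succ_le f hx (i + n)
  have hlim : Tendsto (fun p => edist (f (dyadicFloor n x)) (f (dyadicFloor (p + n) x))) atTop
      (𝓝 (edist (f (dyadicFloor n x)) (f x))) :=
    tendsto_const_nhds.edist
      ((hf.tendsto x).comp ((tendsto_dyadicFloor hx.1).comp (tendsto_add_atTop_nat n)))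
  exact le_of_tendsto' hlim (by simpa only [zero_add] using hchain)

lemma edist_dyadicFloor_le_dyadicIncrMax (f : ℝ → X) {u v : ℝ} (hu : u ∈ Icc (0 : ℝ) 2)
    (hv : v ∈ Icc (0 : ℝ) 2) {n : ℕ} (huv : |u - v| ≤ (2 ^ n)⁻¹) :
    edist (f (dyadicFloor n u)) (f (dyadicFloor n v)) ≤ dyadicIncrMax f n := by
  wlog hvu : v ≤ u generalizing u v
  · rw [edist_comm]
    exact this hv hu (by rwa [abs_sub_comm]) (le_of_not_ge hvu)
  have h2n : (0 : ℝ) < 2 ^ n := by positivity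
  have hle : ⌊u * 2 ^ n⌋₊ ≤ ⌊v * 2 ^ n⌋₊ + 1 := by
    rw [← Nat.floor_add_one (by have := hv.1; positivity)]
    refine Nat.floor_le_floor ?_
    have : (u - v) * 2 ^ n ≤ 1 := by rw [← le_div_iff₀ h2n, one_div]; exact (abs_le.1 huv).2
    linarith [sub_mul u v ((2 : ℝ) ^ n)]
  have hge : ⌊v * 2 ^ n⌋₊ ≤ ⌊u * 2 ^ n⌋₊ := Nat.floor_le_floor (by gcongr)
  obtain heq | hsucc : ⌊u * 2 ^ n⌋₊ = ⌊v * 2 ^ n⌋₊ ∨ ⌊u * 2 ^ n⌋₊ = ⌊v * 2 ^ n⌋₊ + 1 := by omega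
  · rw [dyadicFloor, dyadicFloor, heq, edist_self]
    exact zero_le
  · rw [edist_comm, dyadicFloor, dyadicFloor, hsucc, Nat.cast_add_one]
    apply edist_le_dyadicIncrMax
    have := natFloor_mul_two_pow_le hu n
    omega

theorem edist_le_two_mul_tsum_dyadicIncrMax {f : ℝ → X} (hf : Continuous f) {u v : ℝ}
    (hu : u ∈ Icc (0 : ℝ) 2) (hv : v ∈ Icc (0 : ℝ) 2) {n : ℕ} (huv : |u - v| ≤ (2 ^ n)⁻¹) :
    edist (f u) (f v) ≤ 2 * ∑' m, dyadicIncrMax f (m + n) := by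
  set T := ∑' m, dyadicIncrMax f (m + (n + 1))
  calc edist (f u) (f v)
      ≤ edist (f u) (f (dyadicFloor n u)) + edist (f (dyadicFloor n u)) (f (dyadicFloor n v))
          + edist (f (dyadicFloor n v)) (f v) := edist_triangle4 _ _ _ _
    _ ≤ T + dyadicIncrMax f n + T := by
        gcongr
        · rw [edist_comm]; exact edist_dyadicFloor_le_tsum hf hu n
        · exact edist_dyadicFloor_le_dyadicIncrMax f hu hv huv
        · exact edist_dyadicFloor_le_tsum hf hv n
    _ ≤ (dyadicIncrMax f n + T) + (dyadicIncrMax f n + T) := by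
        rw [add_comm T]; gcongr; exact le_add_self
    _ = 2 * ∑' m, dyadicIncrMax f (m + n) := by rw [tsum_dyadicIncrMax_eq_add, two_mul]

lemma dyadicIncrMax_pow_le_sum (f : ℝ → X) (m p : ℕ) :
    dyadicIncrMax f m ^ p ≤
      ∑ k ∈ Finset.range (2 ^ (m + 1)), edist (f (k / 2 ^ m)) (f ((k + 1) / 2 ^ m)) ^ p := by
  obtain ⟨k, hk, hmax⟩ := Finset.exists_mem_eq_sup _
    (Finset.nonempty_range_iff.2 (pow_ne_zero _ two_ne_zero))
    fun k : ℕ => edist (f (k / 2 ^ m)) (f ((k + 1) / 2 ^ m))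
  rw [dyadicIncrMax, hmax]
  exact Finset.single_le_sum (f := fun k : ℕ => edist (f (k / 2 ^ m)) (f ((k + 1) / 2 ^ m)) ^ p)
    (fun _ _ => zero_le) hk

end Chaining

section MovingAverage

variable {E : Type*} [NormedAddCommGroup E] [NormedSpace ℝ E]

def movingAverage (ε : ℝ) (f : ℝ → E) (u : ℝ) : E := ε⁻¹ • ∫ w in u..u + ε, f w

lemma integral_inv_smul_sub_comp_add_right {f : ℝ → E} (hf : Continuous f) (ε a b : ℝ) :
    ∫ v in a..b, ε⁻¹ • (f (v + ε) - f v) = movingAverage ε f b - movingAverage ε f a := by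
  rw [intervalIntegral.integral_smul, intervalIntegral.integral_sub
      (f := fun v => f (v + ε))
      ((hf.comp (continuous_add_const ε)).intervalIntegrable _ _) (hf.intervalIntegrable _ _),
    intervalIntegral.integral_comp_add_right, intervalIntegral.integral_interval_sub_interval_comm'
      (hf.intervalIntegrable _ _) (hf.intervalIntegrable _ _) (hf.intervalIntegrable _ _),
    smul_sub, movingAverage, movingAverage]

lemma norm_sub_movingAverage_le [CompleteSpace E] {f : ℝ → E} (hf : Continuous f) {ε η u : ℝ}
    (hε : 0 < ε) (h : ∀ v ∈ Icc u (u + ε), ‖f v - f u‖ ≤ η) : ‖f u - movingAverage ε f u‖ ≤ η := by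
  have hrepr : f u - movingAverage ε f u = ε⁻¹ • ∫ v in u..u + ε, (f u - f v) := by
    rw [intervalIntegral.integral_sub intervalIntegrable_const (hf.intervalIntegrable _ _),
      intervalIntegral.integral_const, add_sub_cancel_left, smul_sub, smul_smul,
      inv_mul_cancel₀ hε.ne', one_smul, movingAverage]
  have hint : ‖∫ v in u..u + ε, (f u - f v)‖ ≤ η * ε := by
    have := intervalIntegral.norm_integral_le_of_norm_le_const (a := u) (b := u + ε)
      (C := η) (f := fun v => f u - f v) fun v hv => by
        rw [uIoc_of_le (by linarith)] at hv
        rw [norm_sub_rev]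
        exact h v (Ioc_subset_Icc_self hv)
    rwa [add_sub_cancel_left, abs_of_pos hε] at this
  rw [hrepr, norm_smul, norm_inv, Real.norm_of_nonneg hε.le]
  calc ε⁻¹ * ‖∫ v in u..u + ε, (f u - f v)‖ ≤ ε⁻¹ * (η * ε) := by gcongr
    _ = η := by field_simp

end MovingAverage

lemma energyInf_le_of_norm_le {d : ℕ} {δ s t K : ℝ} {f g : ℝ → EuclideanSpace ℝ (Fin d)}
    (hg : IntegrableOn g (Ioc s t)) (hend : f s + ∫ v in Ioc s t, g v = f t)
    (htube : ∀ u ∈ Icc s t, ‖f u - (f s + ∫ v in Ioc s u, g v)‖ ≤ δ / 2)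
    (hK : ∀ v ∈ Ioc s t, ‖g v‖ ≤ K) :
    energyInf d δ f s t ≤ ENNReal.ofReal (K ^ 2 * (t - s)) := by
  refine sInf_le_of_le ⟨g, hg, hend, htube, rfl⟩ ?_
  calc ∫⁻ v in Ioc s t, ENNReal.ofReal (‖g v‖ ^ 2)
      ≤ ∫⁻ _ in Ioc s t, ENNReal.ofReal (K ^ 2) :=
        setLIntegral_mono measurable_const fun v hv =>
          ENNReal.ofReal_le_ofReal (pow_le_pow_left₀ (norm_nonneg _) (hK v hv) 2)
    _ = ENNReal.ofReal (K ^ 2 * (t - s)) := by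
        rw [setLIntegral_const, Real.volume_Ioc, ← ENNReal.ofReal_mul (sq_nonneg K)]

theorem energyInf_le_of_forall_norm_sub_le {d : ℕ} {δ ε : ℝ} {f : ℝ → EuclideanSpace ℝ (Fin d)}
    (hf : Continuous f) (hε : 0 < ε) (hε1 : ε ≤ 1)
    (hosc : ∀ u ∈ Icc (0 : ℝ) 1, ∀ v ∈ Icc u (u + ε), ‖f v - f u‖ ≤ δ / 8) :
    energyInf d δ f 0 1 ≤ ENNReal.ofReal ((δ / ε) ^ 2) := by
  set A := movingAverage ε f
  have hfA (u : ℝ) (hu : u ∈ Icc (0 : ℝ) 1) : ‖f u - A u‖ ≤ δ / 8 :=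
    norm_sub_movingAverage_le hf hε (hosc u hu)
  have hfA0 := hfA 0 (left_mem_Icc.2 zero_le_one)
  set c := (f 1 - A 1) - (f 0 - A 0)
  have hc : ‖c‖ ≤ δ / 4 := by
    linarith [norm_sub_le (f 1 - A 1) (f 0 - A 0), hfA 1 (right_mem_Icc.2 zero_le_one)]
  -- the derivative of the path `u ↦ f 0 + (A u - A 0) + u • c`
  set g : ℝ → EuclideanSpace ℝ (Fin d) := fun v => ε⁻¹ • (f (v + ε) - f v) + c
  have hg : Continuous g := by fun_prop
  have hint (u : ℝ) (hu : 0 ≤ u) : ∫ v in Ioc 0 u, g v = (A u - A 0) + u • c := by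
    rw [← intervalIntegral.integral_of_le hu, intervalIntegral.integral_add
      ((by fun_prop : Continuous fun v => ε⁻¹ • (f (v + ε) - f v)).intervalIntegrable _ _)
      intervalIntegrable_const, integral_inv_smul_sub_comp_add_right hf,
      intervalIntegral.integral_const, sub_zero]
  have hg_le (v : ℝ) (hv : v ∈ Ioc (0 : ℝ) 1) : ‖g v‖ ≤ δ / ε := by
    have hδ0 : 0 ≤ δ := by linarith [norm_nonneg (f 0 - A 0)]
    have hδ : δ ≤ δ / ε := le_div_self hδ0 hε hε1
    have hincr := hosc v (Ioc_subset_Icc_self hv) (v + ε) ⟨by linarith, le_rfl⟩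
    calc ‖g v‖ ≤ ε⁻¹ * ‖f (v + ε) - f v‖ + ‖c‖ := by
          rw [← Real.norm_of_nonneg (inv_nonneg.2 hε.le), ← norm_smul]; exact norm_add_le _ _
      _ ≤ ε⁻¹ * (δ / 8) + δ / 4 := by gcongr
      _ ≤ δ / ε := by rw [inv_mul_eq_div, div_right_comm]; linarith
  refine (energyInf_le_of_norm_le (hg.integrableOn_Icc.mono_set Ioc_subset_Icc_self) ?_ ?_
    hg_le).trans_eq (by rw [sub_zero, mul_one])
  · rw [hint 1 zero_le_one, one_smul]
    simp only [c]
    abel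
  · intro u hu
    rw [hint u hu.1, show f u - (f 0 + (A u - A 0 + u • c)) = (f u - A u) - (f 0 - A 0) - u • c
      by abel]
    have huc : ‖u • c‖ ≤ δ / 4 := by
      rw [norm_smul, Real.norm_of_nonneg hu.1]
      nlinarith [norm_nonneg c, hu.2]
    linarith [norm_sub_le (f u - A u - (f 0 - A 0)) (u • c), norm_sub_le (f u - A u) (f 0 - A 0),
      hfA u hu]

theorem energyInf_le_of_tsum_dyadicIncrMax_le {d : ℕ} {δ : ℝ} (hδ : 0 ≤ δ)
    {f : ℝ → EuclideanSpace ℝ (Fin d)} (hf : Continuous f) {n : ℕ}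
    (h : ∑' m, dyadicIncrMax f (m + n) ≤ ENNReal.ofReal (δ / 16)) :
    energyInf d δ f 0 1 ≤ ENNReal.ofReal (δ ^ 2) * 4 ^ n := by
  set ε : ℝ := (2 ^ n)⁻¹ with hε_def
  have hε : 0 < ε := by positivity
  have hε1 : ε ≤ 1 := inv_le_one_of_one_le₀ (one_le_pow₀ one_le_two)
  refine (energyInf_le_of_forall_norm_sub_le hf hε hε1 fun u hu v hv => ?_).trans_eq ?_
  · have hedist := edist_le_two_mul_tsum_dyadicIncrMax hf (u := v) (v := u)
      ⟨hu.1.trans hv.1, by linarith [hu.2, hv.2]⟩ ⟨hu.1, by linarith [hu.2]⟩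
      (by rw [abs_of_nonneg (sub_nonneg.2 hv.1)]; exact sub_le_iff_le_add'.2 hv.2)
    have : edist (f v) (f u) ≤ ENNReal.ofReal (δ / 8) := by
      calc edist (f v) (f u) ≤ 2 * ENNReal.ofReal (δ / 16) := hedist.trans (by gcongr)
        _ = ENNReal.ofReal (δ / 8) := by
          rw [← ENNReal.ofReal_ofNat 2, ← ENNReal.ofReal_mul zero_le_two]
          ring_nf
    rwa [edist_dist, dist_eq_norm, ENNReal.ofReal_le_ofReal_iff (by positivity)] at this
  · rw [hε_def, div_inv_eq_mul, mul_pow, ← pow_mul, mul_comm n, pow_mul,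
      ENNReal.ofReal_mul (by positivity), ENNReal.ofReal_pow (by positivity)]
    norm_num

lemma tsum_le_tsum_of_tsum_div_pow_lt_one {a b : ℕ → ℝ≥0∞} {p : ℕ}
    (h : ∑' j, (a j / b j) ^ p < 1) : ∑' j, a j ≤ ∑' j, b j := by
  refine ENNReal.tsum_le_tsum fun j => le_of_not_gt fun hba => h.not_ge ?_
  have hdiv : 1 ≤ a j / b j := (ENNReal.le_div_iff_mul_le (.inr (pos_of_gt hba).ne')
    (.inl hba.ne_top)).2 (by rw [one_mul]; exact hba.le)
  exact (one_le_pow₀ hdiv).trans (ENNReal.le_tsum j)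

lemma le_mul_one_add_tsum_pow_mul {x c a : ℝ≥0∞} {G : ℕ → ℝ≥0∞} (hc : c ≠ 0) (ha : 1 ≤ a)
    (h : ∀ n, G n < 1 → x ≤ c * a ^ n) : x ≤ c * (1 + ∑' n, a ^ (n + 1) * G n) := by
  classical
  by_cases hex : ∃ n, G n < 1
  · refine (h _ (Nat.find_spec hex)).trans ?_
    gcongr c * ?_
    cases hN : Nat.find hex with
    | zero => rw [pow_zero]; exact le_self_add
    | succ n =>
      have hG : 1 ≤ G n := not_lt.1 (Nat.find_min hex (hN ▸ n.lt_succ_self))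
      calc a ^ (n + 1) ≤ a ^ (n + 1) * G n := le_mul_of_one_le_right' hG
        _ ≤ ∑' n, a ^ (n + 1) * G n := ENNReal.le_tsum n
        _ ≤ _ := le_add_self
  · push Not at hex
    have htop : ∑' n, a ^ (n + 1) * G n = ⊤ := top_le_iff.1 <|
      (ENNReal.tsum_const_eq_top_of_ne_zero one_ne_zero).symm.trans_le <|
        ENNReal.tsum_le_tsum fun n => one_le_mul (one_le_pow₀ ha) (hex n)
    simp [htop, hc]

/-- The weights sum to `δ / 16`, and their ratio satisfies `8 * (7 / 8) ^ 8 > 1`, which makes the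
expectation of `dyadicEnergyBound` finite. -/
def chainingWeight (δ : ℝ) (j : ℕ) : ℝ := δ / 128 * (7 / 8) ^ j

lemma tsum_ofReal_chainingWeight {δ : ℝ} (hδ : 0 ≤ δ) :
    ∑' j, ENNReal.ofReal (chainingWeight δ j) = ENNReal.ofReal (δ / 16) := by
  unfold chainingWeight
  rw [← ENNReal.ofReal_tsum_of_nonneg (fun j => by positivity)
    ((summable_geometric_of_lt_one (by norm_num) (by norm_num)).mul_left _), tsum_mul_left,
    tsum_geometric_of_lt_one (by norm_num) (by norm_num)]
  ring_nf

def dyadicEnergyBound {X : Type*} [PseudoEMetricSpace X] (δ : ℝ) (f : ℝ → X) : ℝ≥0∞ :=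
  ENNReal.ofReal (δ ^ 2) * (1 + ∑' n, 4 ^ (n + 1) *
    ∑' j, (dyadicIncrMax f (j + n) / ENNReal.ofReal (chainingWeight δ j)) ^ 8)

theorem energyInf_le_dyadicEnergyBound {d : ℕ} {δ : ℝ} (hδ : 0 < δ)
    {f : ℝ → EuclideanSpace ℝ (Fin d)} (hf : Continuous f) :
    energyInf d δ f 0 1 ≤ dyadicEnergyBound δ f :=
  le_mul_one_add_tsum_pow_mul (ENNReal.ofReal_pos.2 (by positivity)).ne' (by norm_num)
    fun _ hn => energyInf_le_of_tsum_dyadicIncrMax_le hδ.le hf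
      ((tsum_le_tsum_of_tsum_div_pow_lt_one hn).trans (tsum_ofReal_chainingWeight hδ.le).le)

lemma lintegral_ofReal_pow_gaussianReal_lt_top (μ : ℝ) (v : ℝ≥0) (n : ℕ) :
    ∫⁻ x, ENNReal.ofReal (x ^ n) ∂gaussianReal μ v < ⊤ := by
  have hint : Integrable (fun x : ℝ => |x| ^ n) (gaussianReal μ v) := by
    simpa using (memLp_id_gaussianReal (μ := μ) (v := v) n).integrable_norm_pow'
  refine lt_of_le_of_lt (lintegral_mono fun x => ENNReal.ofReal_le_ofReal ?_) hint.lintegral_lt_top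
  exact (le_abs_self _).trans (abs_pow x n).le

lemma lintegral_ofReal_pow_gaussianReal (v : ℝ≥0) (n : ℕ) :
    ∫⁻ x, ENNReal.ofReal (x ^ (2 * n)) ∂gaussianReal 0 v =
      ENNReal.ofReal ((v : ℝ) ^ n) * ∫⁻ x, ENNReal.ofReal (x ^ (2 * n)) ∂gaussianReal 0 1 := by
  have hmap : gaussianReal 0 v = (gaussianReal 0 1).map (Real.sqrt v * ·) := by
    rw [gaussianReal_map_const_mul, mul_zero, mul_one]
    congr
    ext
    simp
  rw [hmap, lintegral_map (by fun_prop) (by fun_prop), ← lintegral_const_mul _ (by fun_prop)]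
  congr with x
  rw [← ENNReal.ofReal_mul (by positivity), mul_pow, pow_mul, Real.sq_sqrt v.coe_nonneg]

lemma norm_pow_le_card_pow_mul_sum_pow {ι : Type*} [Fintype ι] (x : EuclideanSpace ℝ ι) (p : ℕ) :
    ‖x‖ ^ (2 * (p + 1)) ≤ (Fintype.card ι : ℝ) ^ p * ∑ i, x i ^ (2 * (p + 1)) := by
  simp_rw [pow_mul, EuclideanSpace.real_norm_sq_eq]
  exact pow_sum_le_card_mul_sum_pow (fun i _ => sq_nonneg (x i)) p

lemma tsum_tsum_ofReal_geometric_lt_top {c a b : ℝ} (ha0 : 0 ≤ a) (ha : a < 1) (hb0 : 0 ≤ b)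
    (hb : b < 1) : ∑' n, ∑' j, ENNReal.ofReal (c * a ^ n * b ^ j) < ⊤ := by
  simp_rw [ENNReal.ofReal_mul' (pow_nonneg hb0 _), ENNReal.ofReal_mul' (pow_nonneg ha0 _),
    ENNReal.ofReal_pow ha0, ENNReal.ofReal_pow hb0, ENNReal.tsum_mul_left, ENNReal.tsum_mul_right,
    ENNReal.tsum_mul_left]
  exact ENNReal.mul_lt_top (ENNReal.mul_lt_top ENNReal.ofReal_lt_top
    (tsum_geometric_lt_top.2 (ENNReal.ofReal_lt_one.2 ha)))
    (tsum_geometric_lt_top.2 (ENNReal.ofReal_lt_one.2 hb))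

section BrownianMotion

variable {d : ℕ} {Ω : Type*} [MeasurableSpace Ω] {P : Measure Ω}
  {W : Ω → ℝ → EuclideanSpace ℝ (Fin d)} {x₀ : EuclideanSpace ℝ (Fin d)}

namespace IsBrownianMotion

lemma lintegral_norm_sub_pow_eight_le (hW : IsBrownianMotion d P W x₀) {s t : ℝ} (hs : 0 ≤ s)
    (hst : s ≤ t) :
    ∫⁻ ω, ENNReal.ofReal (‖W ω t - W ω s‖ ^ 8) ∂P ≤
      ENNReal.ofReal ((d : ℝ) ^ 4 * (t - s) ^ 4) *
        ∫⁻ x, ENNReal.ofReal (x ^ 8) ∂gaussianReal 0 1 := by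
  set C := ∫⁻ x, ENNReal.ofReal (x ^ 8) ∂gaussianReal 0 1
  have hX (i : Fin d) : Measurable fun ω => (W ω t - W ω s) i :=
    (EuclideanSpace.proj i).continuous.measurable.comp ((hW.meas t).sub (hW.meas s))
  have hcoord (i : Fin d) :
      ∫⁻ ω, ENNReal.ofReal ((W ω t - W ω s) i ^ 8) ∂P = ENNReal.ofReal ((t - s) ^ 4) * C := by
    rw [← lintegral_map (f := fun x : ℝ => ENNReal.ofReal (x ^ 8)) (by fun_prop) (hX i),
      hW.gauss_incr s t hs hst i]
    exact (lintegral_ofReal_pow_gaussianReal _ 4).trans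
      (by rw [Real.coe_toNNReal _ (sub_nonneg.2 hst)])
  calc ∫⁻ ω, ENNReal.ofReal (‖W ω t - W ω s‖ ^ 8) ∂P
      ≤ ∫⁻ ω, ENNReal.ofReal ((d : ℝ) ^ 3) *
          ∑ i, ENNReal.ofReal ((W ω t - W ω s) i ^ 8) ∂P := by
        refine lintegral_mono fun ω => ?_
        rw [← ENNReal.ofReal_sum_of_nonneg fun i _ => by positivity,
          ← ENNReal.ofReal_mul (by positivity)]
        simpa using ENNReal.ofReal_le_ofReal (norm_pow_le_card_pow_mul_sum_pow (W ω t - W ω s) 3)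
    _ = ENNReal.ofReal ((d : ℝ) ^ 3) * (d * (ENNReal.ofReal ((t - s) ^ 4) * C)) := by
        have hmeas (i : Fin d) : Measurable fun ω => ENNReal.ofReal ((W ω t - W ω s) i ^ 8) :=
          ((hX i).pow_const 8).ennreal_ofReal
        rw [lintegral_const_mul _ (Finset.measurable_sum _ fun i _ => hmeas i),
          lintegral_finsetSum _ fun i _ => hmeas i,
          Finset.sum_congr rfl fun i _ => hcoord i, Finset.sum_const, Finset.card_univ,
          Fintype.card_fin, nsmul_eq_mul]
    _ = ENNReal.ofReal ((d : ℝ) ^ 4 * (t - s) ^ 4) * C := by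
        rw [ENNReal.ofReal_mul (by positivity), ENNReal.ofReal_pow (Nat.cast_nonneg d),
          ENNReal.ofReal_pow (Nat.cast_nonneg d), ENNReal.ofReal_natCast]
        ring

lemma measurable_dyadicIncrMax (hW : IsBrownianMotion d P W x₀) (m : ℕ) :
    Measurable fun ω => dyadicIncrMax (W ω) m := by
  simp only [dyadicIncrMax, Finset.sup_eq_iSup]
  exact Measurable.biSup _ (Finset.countable_toSet _) fun k _ =>
    (hW.meas _).edist (hW.meas _)

lemma lintegral_dyadicIncrMax_pow_le (hW : IsBrownianMotion d P W x₀) (m : ℕ) :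
    ∫⁻ ω, dyadicIncrMax (W ω) m ^ 8 ∂P ≤
      ENNReal.ofReal (2 * (d : ℝ) ^ 4 * (1 / 8) ^ m) *
        ∫⁻ x, ENNReal.ofReal (x ^ 8) ∂gaussianReal 0 1 := by
  set C := ∫⁻ x, ENNReal.ofReal (x ^ 8) ∂gaussianReal 0 1
  have hincr (k : ℕ) (ω : Ω) : edist (W ω (k / 2 ^ m)) (W ω ((k + 1) / 2 ^ m)) ^ 8 =
      ENNReal.ofReal (‖W ω ((k + 1) / 2 ^ m) - W ω (k / 2 ^ m)‖ ^ 8) := by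
    rw [edist_comm, edist_dist, dist_eq_norm, ENNReal.ofReal_pow (norm_nonneg _)]
  calc ∫⁻ ω, dyadicIncrMax (W ω) m ^ 8 ∂P
      ≤ ∫⁻ ω, ∑ k ∈ Finset.range (2 ^ (m + 1)),
          ENNReal.ofReal (‖W ω ((k + 1) / 2 ^ m) - W ω (k / 2 ^ m)‖ ^ 8) ∂P :=
        lintegral_mono fun ω =>
          (dyadicIncrMax_pow_le_sum (W ω) m 8).trans_eq (by simp only [hincr])
    _ = ∑ k ∈ Finset.range (2 ^ (m + 1)),
          ∫⁻ ω, ENNReal.ofReal (‖W ω ((k + 1) / 2 ^ m) - W ω (k / 2 ^ m)‖ ^ 8) ∂P :=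
        lintegral_finsetSum _ fun k _ =>
          ((((hW.meas _).sub (hW.meas _)).norm.pow_const 8).ennreal_ofReal)
    _ ≤ ∑ _k ∈ Finset.range (2 ^ (m + 1)),
          ENNReal.ofReal ((d : ℝ) ^ 4 * ((2 ^ m)⁻¹) ^ 4) * C := by
        refine Finset.sum_le_sum fun k _ => ?_
        refine (hW.lintegral_norm_sub_pow_eight_le (s := k / 2 ^ m) (t := (k + 1) / 2 ^ m)
          (by positivity) (by gcongr; linarith)).trans_eq ?_
        rw [show ((k : ℝ) + 1) / 2 ^ m - k / 2 ^ m = (2 ^ m)⁻¹ by ring]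
    _ = ENNReal.ofReal (2 * (d : ℝ) ^ 4 * (1 / 8) ^ m) * C := by
        rw [Finset.sum_const, Finset.card_range, nsmul_eq_mul, ← mul_assoc,
          ← ENNReal.ofReal_natCast, ← ENNReal.ofReal_mul (by positivity)]
        have h8 : (8 : ℝ) ^ m = (2 ^ m) ^ 3 := by rw [← pow_mul, mul_comm, pow_mul]; norm_num
        congr 2
        simp only [one_div, inv_pow, h8]
        push_cast
        field_simp
        ring

lemma measurable_dyadicEnergyBound (hW : IsBrownianMotion d P W x₀) (δ : ℝ) :
    Measurable fun ω => dyadicEnergyBound δ (W ω) := by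
  have := hW.measurable_dyadicIncrMax
  unfold dyadicEnergyBound
  fun_prop

lemma lintegral_dyadicEnergyBound [IsProbabilityMeasure P] (hW : IsBrownianMotion d P W x₀)
    (δ : ℝ) :
    ∫⁻ ω, dyadicEnergyBound δ (W ω) ∂P = ENNReal.ofReal (δ ^ 2) * (1 + ∑' n, 4 ^ (n + 1) *
      ∑' j, ∫⁻ ω, (dyadicIncrMax (W ω) (j + n) / ENNReal.ofReal (chainingWeight δ j)) ^ 8 ∂P) := by
  have := hW.measurable_dyadicIncrMax
  unfold dyadicEnergyBound
  rw [lintegral_const_mul _ (by fun_prop), lintegral_add_left measurable_const, lintegral_one,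
    measure_univ, lintegral_tsum fun n => (by fun_prop : Measurable _).aemeasurable]
  congr 2
  refine tsum_congr fun n => ?_
  rw [lintegral_const_mul _ (by fun_prop),
    lintegral_tsum fun j => (by fun_prop : Measurable _).aemeasurable]

lemma pow_mul_lintegral_dyadicIncrMax_div_pow_le (hW : IsBrownianMotion d P W x₀) {δ : ℝ}
    (hδ : 0 < δ) (n j : ℕ) :
    4 ^ (n + 1) *
        ∫⁻ ω, (dyadicIncrMax (W ω) (j + n) / ENNReal.ofReal (chainingWeight δ j)) ^ 8 ∂P ≤
      ENNReal.ofReal (4 * (2 * (d : ℝ) ^ 4) / (δ / 128) ^ 8 * (4 * (1 / 8)) ^ n *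
          (1 / 8 / (7 / 8) ^ 8) ^ j) *
        ∫⁻ x, ENNReal.ofReal (x ^ 8) ∂gaussianReal 0 1 := by
  set C := ∫⁻ x, ENNReal.ofReal (x ^ 8) ∂gaussianReal 0 1
  have hb : 0 < chainingWeight δ j := by unfold chainingWeight; positivity
  -- stated for free variables, so that `ring` does not evaluate the numerical powers
  have key (K ρ β r : ℝ) (hβ : β ≠ 0) (hr : r ≠ 0) :
      4 ^ (n + 1) * (K * ρ ^ (j + n)) / (β * r ^ j) ^ 8 =
        4 * K / β ^ 8 * (4 * ρ) ^ n * (ρ / r ^ 8) ^ j := by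
    rw [div_pow, ← pow_mul, mul_pow, mul_pow, ← pow_mul, mul_comm 8 j]
    field_simp
    ring
  have hdiv (x y : ℝ≥0∞) : (x / y) ^ 8 = x ^ 8 * (y ^ 8)⁻¹ := by
    rw [div_eq_mul_inv, mul_pow, ENNReal.inv_pow]
  simp_rw [hdiv]
  rw [lintegral_mul_const _ ((hW.measurable_dyadicIncrMax _).pow_const 8)]
  calc _ ≤ 4 ^ (n + 1) * (ENNReal.ofReal (2 * (d : ℝ) ^ 4 * (1 / 8) ^ (j + n)) * C *
        (ENNReal.ofReal (chainingWeight δ j) ^ 8)⁻¹) := by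
        gcongr; exact hW.lintegral_dyadicIncrMax_pow_le _
    _ = ENNReal.ofReal (4 ^ (n + 1) * (2 * (d : ℝ) ^ 4 * (1 / 8) ^ (j + n)) /
        (chainingWeight δ j) ^ 8) * C := by
        rw [ENNReal.ofReal_div_of_pos (by positivity),
          ENNReal.ofReal_mul (by positivity : (0 : ℝ) ≤ 4 ^ (n + 1)),
          ENNReal.ofReal_pow (by norm_num : (0 : ℝ) ≤ 4), ENNReal.ofReal_ofNat,
          ENNReal.ofReal_pow hb.le, ENNReal.div_eq_inv_mul]
        ring
    _ = _ := by rw [chainingWeight, key _ _ (δ / 128) (7 / 8) (by positivity) (by norm_num)]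

theorem lintegral_dyadicEnergyBound_lt_top [IsProbabilityMeasure P]
    (hW : IsBrownianMotion d P W x₀) {δ : ℝ} (hδ : 0 < δ) :
    ∫⁻ ω, dyadicEnergyBound δ (W ω) ∂P < ⊤ := by
  rw [hW.lintegral_dyadicEnergyBound]
  calc _ ≤ ENNReal.ofReal (δ ^ 2) * (1 + ∑' n, ∑' j, ENNReal.ofReal
          (4 * (2 * (d : ℝ) ^ 4) / (δ / 128) ^ 8 * (4 * (1 / 8)) ^ n * (1 / 8 / (7 / 8) ^ 8) ^ j) *
            ∫⁻ x, ENNReal.ofReal (x ^ 8) ∂gaussianReal 0 1) := by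
        gcongr with n
        rw [← ENNReal.tsum_mul_left]
        exact ENNReal.tsum_le_tsum (hW.pow_mul_lintegral_dyadicIncrMax_div_pow_le hδ n)
    _ < ⊤ := by
        simp_rw [ENNReal.tsum_mul_right]
        exact ENNReal.mul_lt_top ENNReal.ofReal_lt_top (ENNReal.add_lt_top.2 ⟨ENNReal.one_lt_top,
          ENNReal.mul_lt_top
            (tsum_tsum_ofReal_geometric_lt_top (by norm_num) (by norm_num) (by norm_num)
              (by norm_num))
            (lintegral_ofReal_pow_gaussianReal_lt_top 0 1 8)⟩)

end IsBrownianMotion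

end BrownianMotion

theorem energyInf_finite_and_integrable_general (d : ℕ) (δ : ℝ) (hδ : 0 < δ)
    {Ω : Type*} [MeasurableSpace Ω] (P : Measure Ω) [IsProbabilityMeasure P]
    (W : Ω → ℝ → EuclideanSpace ℝ (Fin d)) (hW : IsBrownianMotion d P W 0) :
    (∀ᵐ ω ∂P, energyInf d δ (W ω) 0 1 < ⊤) ∧
      (∫⁻ ω, energyInf d δ (W ω) 0 1 ∂P) < ⊤ := by
  have hle : ∀ᵐ ω ∂P, energyInf d δ (W ω) 0 1 ≤ dyadicEnergyBound δ (W ω) :=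
    hW.cont.mono fun ω hω => energyInf_le_dyadicEnergyBound hδ hω
  have hint := hW.lintegral_dyadicEnergyBound_lt_top hδ
  refine ⟨?_, (lintegral_mono_ae hle).trans_lt hint⟩
  filter_upwards [hle, ae_lt_top (hW.measurable_dyadicEnergyBound δ) hint.ne] with ω hY hbound
  exact hY.trans_lt hbound

/-- Fix `δ > 0` and let `W` be a standard `d`-dimensional Brownian motion
started at `0`. Then `Y_{0,1}(W) < ∞` almost surely and `E_0[Y_{0,1}(W)] < ∞`, where
`Y_{0,1}(W)` is the constrained Dirichlet energy `energyInf d δ (W ω) 0 1`. -/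
theorem energyInf_finite_and_integrable (d : ℕ) (hd : 1 ≤ d) (δ : ℝ) (hδ : 0 < δ)
    {Ω : Type*} [MeasurableSpace Ω] (P : Measure Ω) [IsProbabilityMeasure P]
    (W : Ω → ℝ → EuclideanSpace ℝ (Fin d)) (hW : IsBrownianMotion d P W 0) :
    (∀ᵐ ω ∂P, energyInf d δ (W ω) 0 1 < ⊤) ∧
      (∫⁻ ω, energyInf d δ (W ω) 0 1 ∂P) < ⊤ :=
  energyInf_finite_and_integrable_general d δ hδ P W hW

end
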